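/- arXiv:2404.10752 — 2 statements merged into one kernel-verified Lean document; each statement's English description precedes it below -/
import Mathlib

section
/- The complement of the set of inductive constraints satisfies the identity: the complement of Ind equals the first projection of ((𝒱 ∘ Δ ∘ complement(𝒱⁻¹)) ∩ Id_𝒜), where Id_𝒜 is the identity relation on 𝒜 and ∘ denotes relational composition. -/
/-- The post-image of a set under a transition relation. -/
def post {C : Type*} (Δ : C → C → Prop) (X : Set C) : Set C :=
  {c' | ∃ c ∈ X, Δ c c'}

/-- Relational composition. -/
def RelComp {X Y Z : Type*} (R : X → Y → Prop) (S : Y → Z → Prop) (x : X) (z : Z) : Prop :=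
  ∃ y, R x y ∧ S y z

/-- A constraint `a` is inductive if its interpretation is closed under `Δ`. -/
def IndConstraint {C A : Type*} (Δ : C → C → Prop) (V : A → C → Prop) (a : A) : Prop :=
  post Δ {c | V a c} ⊆ {c | V a c}

/-- `complement(Ind) = proj₁ ((𝒱 ∘ Δ ∘ complement(𝒱⁻¹)) ∩ Id_𝒜)`. -/
theorem compl_ind_eq {C A : Type*} (Δ : C → C → Prop) (V : A → C → Prop) :
    {a : A | ¬ IndConstraint Δ V a} =
      {a : A | ∃ a' : A,
        RelComp (RelComp V Δ) (fun (c : C) (b : A) => ¬ V b c) a a' ∧ a = a'} := by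
  ext a
  simp only [Set.mem_setOf_eq, IndConstraint, post, RelComp, Set.subset_def, Set.mem_setOf_eq]
  constructor
  · intro h
    push_neg at h
    obtain ⟨c', ⟨c, hc, hΔ⟩, hnc⟩ := h
    exact ⟨a, ⟨c', ⟨c, hc, hΔ⟩, hnc⟩, rfl⟩
  · rintro ⟨a', ⟨c', ⟨c, hc, hΔ⟩, hnc⟩, rfl⟩ h
    exact hnc (h c' ⟨c, hc, hΔ⟩)
end

section
/- The complement of the potential reachability relation satisfies the identity: complement(PReach) = 𝒱⁻¹ ∘ (Id_𝒜 ∩ (Ind × Ind)) ∘ complement(𝒱), where Id_𝒜 is the identity relation on 𝒜. -/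
/-- The potential reachability relation induced by an abstraction framework. -/
def PReach {C A : Type*} (Δ : C → C → Prop) (V : A → C → Prop) (c c' : C) : Prop :=
  ∀ a : A, IndConstraint Δ V a → V a c → V a c'

/-- `complement(PReach) = 𝒱⁻¹ ∘ (Id_𝒜 ∩ (Ind × Ind)) ∘ complement(𝒱)`. -/
theorem compl_preach_eq {C A : Type*} (Δ : C → C → Prop) (V : A → C → Prop) (c c' : C) :
    ¬ PReach Δ V c c' ↔
      RelComp (RelComp (fun (c : C) (a : A) => V a c)
          (fun (a a' : A) => a = a' ∧ IndConstraint Δ V a ∧ IndConstraint Δ V a'))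
        (fun (a : A) (c : C) => ¬ V a c) c c' := by
  unfold PReach RelComp
  push_neg
  constructor
  · rintro ⟨a, hi, hv, hnv⟩
    exact ⟨a, ⟨a, hv, rfl, hi, hi⟩, hnv⟩
  · rintro ⟨a, ⟨b, hv, rfl, hi, _⟩, hnv⟩
    exact ⟨b, hi, hv, hnv⟩
end
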